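/- arXiv:1008.2136 — 3 statements merged into one kernel-verified Lean document; each statement's English description precedes it below -/
import Mathlib

section
/- If G is a 2-node-connected series-parallel capacitated graph, then either G is a capacitated ring, or G has a strict 2-cut. -/
open scoped Classical

namespace FlowCut

variable {V : Type} [Fintype V] [DecidableEq V]

/-- `c` assigns a positive integer weight to each edge of `G` (and `0` to non-edges). -/
def IsIntWeight (G : SimpleGraph V) (c : V → V → ℚ) : Prop :=
  (∀ u v, c u v = c v u) ∧ (∀ u v, G.Adj u v → ∃ n : ℕ, 0 < n ∧ c u v = n) ∧
    (∀ u v, ¬ G.Adj u v → c u v = 0)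

/-- `G` has a `K₄` minor, witnessed by four disjoint nonempty connected branch sets that are
pairwise joined by an edge of `G`.  A graph is series-parallel iff it has no `K₄` minor. -/
def HasK4Minor (G : SimpleGraph V) : Prop :=
  ∃ B : Fin 4 → Finset V,
    (∀ i, (B i).Nonempty) ∧
    (∀ i j, i ≠ j → Disjoint (B i) (B j)) ∧
    (∀ i, (G.induce (↑(B i) : Set V)).Connected) ∧
    (∀ i j, i ≠ j → ∃ a ∈ B i, ∃ b ∈ B j, G.Adj a b)

/-- `G` is 2-node-connected: it has at least 3 nodes, is connected, and stays connected
after deleting any single node. -/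
def TwoConnected (G : SimpleGraph V) : Prop :=
  3 ≤ Fintype.card V ∧ G.Connected ∧ ∀ v : V, (G.induce {u : V | u ≠ v}).Connected

/-- `{u, v}` is a strict cut: there are at least two nontrivial bridges (components of
`G − {u, v}`) and at least three bridges (counting the edge `uv` if present). -/
def StrictTwoCut (G : SimpleGraph V) (u v : V) : Prop :=
  u ≠ v ∧
    2 ≤ Nat.card (G.induce {w : V | w ≠ u ∧ w ≠ v}).ConnectedComponent ∧
    3 ≤ Nat.card (G.induce {w : V | w ≠ u ∧ w ≠ v}).ConnectedComponent +
      (if G.Adj u v then 1 else 0)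

end FlowCut

/-!
A vertex `w` of degree at least three in a 2-connected graph has neighbours `a`, `b`, `d`. A path
from `a` to `b` in `G - w` and a path from `d` to it, arriving at `x`, form a tripod centred at
`x`; its three legs minus `x` are disjoint connected sets joined to both `w` and `x`, one of which
may degenerate to the edge `wx`. If two of them met in `G - {w, x}`, growing one of them until it
touches another would give a `K₄` minor with branch sets `{w} ∪ (third leg)`, `{x}` and the two
touching sets. So `{w, x}` is a strict 2-cut. Every vertex has degree at least two, so if none has
degree three or more, the connected graph `G` is a ring.
-/

namespace SimpleGraph

variable {V : Type*} {G : SimpleGraph V}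

lemma Reachable.exists_walk_of_induce {s : Set V} {x y : s} (h : (G.induce s).Reachable x y) :
    ∃ p : G.Walk x y, ∀ t ∈ p.support, t ∈ s := by
  obtain ⟨q⟩ := h
  have hq : ∀ t ∈ (q.map (Embedding.induce s).toHom).support, t ∈ s := by
    intro t ht
    rw [Walk.support_map, List.mem_map] at ht
    obtain ⟨t', -, rfl⟩ := ht
    exact t'.2
  exact ⟨_, hq⟩

lemma connected_induce_singleton (v : V) : (G.induce {v}).Connected :=
  connected_iff _ |>.2 ⟨.of_subsingleton, ⟨⟨v, rfl⟩⟩⟩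

lemma exists_connected_superset_adj_of_walk {U T X : Set V} (hX : (G.induce X).Connected)
    (hXU : X ⊆ U) (hXT : Disjoint X T) {a b : V} (p : G.Walk a b) (ha : a ∈ X) (hb : b ∈ T)
    (hpU : ∀ t ∈ p.support, t ∈ U) :
    ∃ Y, X ⊆ Y ∧ Y ⊆ U ∧ Disjoint Y T ∧ (G.induce Y).Connected ∧
      ∃ y ∈ Y, ∃ z ∈ T, G.Adj y z := by
  induction p generalizing X with
  | nil => exact absurd hb (hXT.notMem_of_mem_left ha)
  | @cons a a' b h q ih =>
    by_cases ha' : a' ∈ T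
    · exact ⟨X, subset_rfl, hXU, hXT, hX, a, ha, a', ha', h⟩
    have hX' : (G.induce (X ∪ {a'})).Connected :=
      connected_induce_union hX.preconnected .of_subsingleton ha rfl h
    obtain ⟨Y, hXY, hYU, hYT, hY, hadj⟩ := ih hX'
      (Set.union_subset hXU (Set.singleton_subset_iff.2 (hpU a' (by simp))))
      (Set.disjoint_union_left.2 ⟨hXT, Set.disjoint_singleton_left.2 ha'⟩) (Or.inr rfl) hb
      (fun t ht => hpU t (by simp [ht]))
    exact ⟨Y, Set.subset_union_left.trans hXY, hYU, hYT, hY, hadj⟩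

end SimpleGraph

namespace FlowCut

open SimpleGraph

section Links

variable {V : Type} {G : SimpleGraph V}

/-- The vertex set of a nontrivial bridge at `{u, v}` is linking, and every linking set lies
inside a single one. -/
structure IsLinkingSet (G : SimpleGraph V) (u v : V) (X : Set V) : Prop where
  left_notMem : u ∉ X
  right_notMem : v ∉ X
  connected : (G.induce X).Connected
  exists_adj_left : ∃ a ∈ X, G.Adj u a
  exists_adj_right : ∃ b ∈ X, G.Adj v b

def HasThirdLink (G : SimpleGraph V) (u v : V) (A B : Set V) : Prop :=
  G.Adj u v ∨ ∃ K, IsLinkingSet G u v K ∧ Disjoint A K ∧ Disjoint B K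

lemma IsLinkingSet.superset {u v : V} {X Y : Set V} (hX : IsLinkingSet G u v X) (hXY : X ⊆ Y)
    (hu : u ∉ Y) (hv : v ∉ Y) (hY : (G.induce Y).Connected) : IsLinkingSet G u v Y where
  left_notMem := hu
  right_notMem := hv
  connected := hY
  exists_adj_left := let ⟨a, ha, hua⟩ := hX.exists_adj_left; ⟨a, hXY ha, hua⟩
  exists_adj_right := let ⟨b, hb, hvb⟩ := hX.exists_adj_right; ⟨b, hXY hb, hvb⟩

lemma HasThirdLink.exists_branchSet {u v : V} {A B : Set V} (h : HasThirdLink G u v A B)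
    (huv : u ≠ v) (hA : u ∉ A) (hB : u ∉ B) :
    ∃ C : Set V, u ∈ C ∧ v ∉ C ∧ (G.induce C).Connected ∧ (∃ c ∈ C, G.Adj c v) ∧
      Disjoint C A ∧ Disjoint C B := by
  rcases h with hadj | ⟨K, hK, hAK, hBK⟩
  · exact ⟨{u}, rfl, huv.symm, connected_induce_singleton u, ⟨u, rfl, hadj⟩,
      Set.disjoint_singleton_left.2 hA, Set.disjoint_singleton_left.2 hB⟩
  obtain ⟨a, haK, hua⟩ := hK.exists_adj_left
  obtain ⟨b, hbK, hvb⟩ := hK.exists_adj_right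
  refine ⟨{u} ∪ K, Or.inl rfl, ?_, connected_induce_union .of_subsingleton
    hK.connected.preconnected rfl haK hua, ⟨b, Or.inr hbK, hvb.symm⟩,
    Set.disjoint_union_left.2 ⟨Set.disjoint_singleton_left.2 hA, hAK.symm⟩,
    Set.disjoint_union_left.2 ⟨Set.disjoint_singleton_left.2 hB, hBK.symm⟩⟩
  rintro (rfl | hvK)
  · exact huv rfl
  · exact hK.right_notMem hvK

lemma forall_ne_fin_four {α : Type*} {R : α → α → Prop} (hR : ∀ x y, R x y → R y x)
    {a b c d : α} (hab : R a b) (hac : R a c) (had : R a d) (hbc : R b c) (hbd : R b d)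
    (hcd : R c d) : ∀ i j : Fin 4, i ≠ j → R (![a, b, c, d] i) (![a, b, c, d] j) := by
  intro i j hij
  fin_cases i <;> fin_cases j <;> first | exact absurd rfl hij | assumption | exact hR _ _ ‹_›

lemma hasK4Minor_of_branchSets [Finite V] (B : Fin 4 → Set V)
    (hconn : ∀ i, (G.induce (B i)).Connected) (hdisj : ∀ i j, i ≠ j → Disjoint (B i) (B j))
    (hadj : ∀ i j, i ≠ j → ∃ a ∈ B i, ∃ b ∈ B j, G.Adj a b) : HasK4Minor G := by
  refine ⟨fun i => (B i).toFinite.toFinset, fun i => ?_, fun i j hij => ?_, fun i => ?_,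
    fun i j hij => ?_⟩
  · simpa using (hconn i).nonempty.elim fun x => ⟨x.1, x.2⟩
  · simpa using hdisj i j hij
  · rw [Set.Finite.coe_toFinset]
    exact hconn i
  · simpa using hadj i j hij

/-- Branch sets: `u` together with the third link, `{v}`, `A` and `D`. -/
lemma hasK4Minor_of_adj [Finite V] {u v : V} {A D : Set V} (huv : u ≠ v)
    (hA : IsLinkingSet G u v A) (hD : IsLinkingSet G u v D) (hAD : Disjoint A D)
    (hthird : HasThirdLink G u v A D) (hadj : ∃ a ∈ A, ∃ d ∈ D, G.Adj a d) :
    HasK4Minor G := by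
  obtain ⟨C, huC, hvC, hC, hCv, hCA, hCD⟩ :=
    hthird.exists_branchSet huv hA.left_notMem hD.left_notMem
  obtain ⟨a, haA, hua⟩ := hA.exists_adj_left
  obtain ⟨a', ha'A, hva'⟩ := hA.exists_adj_right
  obtain ⟨d, hdD, hud⟩ := hD.exists_adj_left
  obtain ⟨d', hd'D, hvd'⟩ := hD.exists_adj_right
  apply hasK4Minor_of_branchSets ![C, {v}, A, D]
  · intro i
    fin_cases i
    exacts [hC, connected_induce_singleton v, hA.connected, hD.connected]
  · exact forall_ne_fin_four (fun _ _ h => h.symm) (Set.disjoint_singleton_right.2 hvC) hCA hCD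
      (Set.disjoint_singleton_left.2 hA.right_notMem)
      (Set.disjoint_singleton_left.2 hD.right_notMem) hAD
  · refine forall_ne_fin_four (R := fun X Y : Set V => ∃ x ∈ X, ∃ y ∈ Y, G.Adj x y)
      (fun _ _ ⟨x, hx, y, hy, hxy⟩ => ⟨y, hy, x, hx, hxy.symm⟩)
      ?_ ⟨u, huC, a, haA, hua⟩ ⟨u, huC, d, hdD, hud⟩ ⟨v, rfl, a', ha'A, hva'⟩
      ⟨v, rfl, d', hd'D, hvd'⟩ hadj
    obtain ⟨c, hc, hcv⟩ := hCv
    exact ⟨c, hc, v, rfl, hcv⟩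

lemma connectedComponentMk_ne_of_hasThirdLink [Finite V] (hsp : ¬ HasK4Minor G) {u v : V}
    (huv : u ≠ v) {I J : Set V} (hI : IsLinkingSet G u v I) (hJ : IsLinkingSet G u v J)
    (hIJ : Disjoint I J) (hthird : HasThirdLink G u v I J) {x y : {w : V | w ≠ u ∧ w ≠ v}}
    (hx : x.1 ∈ I) (hy : y.1 ∈ J) :
    (G.induce {w : V | w ≠ u ∧ w ≠ v}).connectedComponentMk x ≠
      (G.induce {w : V | w ≠ u ∧ w ≠ v}).connectedComponentMk y := by
  intro h
  obtain ⟨p, hp⟩ := (ConnectedComponent.exact h).exists_walk_of_induce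
  have hIU : I ⊆ {w : V | w ≠ u ∧ w ≠ v} := fun t ht =>
    ⟨ne_of_mem_of_not_mem ht hI.left_notMem, ne_of_mem_of_not_mem ht hI.right_notMem⟩
  have hlink : ∀ {Y : Set V}, I ⊆ Y → Y ⊆ {w : V | w ≠ u ∧ w ≠ v} →
      (G.induce Y).Connected → IsLinkingSet G u v Y := fun hIY hYU hY =>
    hI.superset hIY (fun hu => (hYU hu).1 rfl) (fun hv => (hYU hv).2 rfl) hY
  rcases hthird with hadj | ⟨K, hK, hIK, hJK⟩
  · obtain ⟨Y, hIY, hYU, hYJ, hY, hYadj⟩ :=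
      exists_connected_superset_adj_of_walk hI.connected hIU hIJ p hx hy hp
    exact hsp (hasK4Minor_of_adj huv (hlink hIY hYU hY) hJ hYJ (Or.inl hadj) hYadj)
  · obtain ⟨Y, hIY, hYU, hYJK, hY, y', hy', z, hz, hyz⟩ :=
      exists_connected_superset_adj_of_walk hI.connected hIU
        (Set.disjoint_union_right.2 ⟨hIJ, hIK⟩) p hx (Or.inl hy) hp
    obtain ⟨hYJ, hYK⟩ := Set.disjoint_union_right.1 hYJK
    rcases hz with hzJ | hzK
    · exact hsp (hasK4Minor_of_adj huv (hlink hIY hYU hY) hJ hYJ (Or.inr ⟨K, hK, hYK, hJK⟩)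
        ⟨y', hy', z, hzJ, hyz⟩)
    · exact hsp (hasK4Minor_of_adj huv (hlink hIY hYU hY) hK hYK
        (Or.inr ⟨J, hJ, hYJ, hJK.symm⟩) ⟨y', hy', z, hzK, hyz⟩)

lemma IsLinkingSet.exists_mem {u v : V} {I : Set V} (hI : IsLinkingSet G u v I) :
    ∃ x : {w : V | w ≠ u ∧ w ≠ v}, x.1 ∈ I :=
  let ⟨a, ha, _⟩ := hI.exists_adj_left
  ⟨⟨a, ne_of_mem_of_not_mem ha hI.left_notMem, ne_of_mem_of_not_mem ha hI.right_notMem⟩, ha⟩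

lemma two_le_card_connectedComponent [Finite V] (hsp : ¬ HasK4Minor G) {u v : V}
    (huv : u ≠ v) {I J : Set V} (hI : IsLinkingSet G u v I) (hJ : IsLinkingSet G u v J)
    (hIJ : Disjoint I J) (hthird : HasThirdLink G u v I J) :
    2 ≤ Nat.card (G.induce {w : V | w ≠ u ∧ w ≠ v}).ConnectedComponent := by
  obtain ⟨x, hx⟩ := hI.exists_mem
  obtain ⟨y, hy⟩ := hJ.exists_mem
  exact Finite.one_lt_card_iff_nontrivial.2
    ⟨_, _, connectedComponentMk_ne_of_hasThirdLink hsp huv hI hJ hIJ hthird hx hy⟩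

lemma three_le_card_connectedComponent [Finite V] (hsp : ¬ HasK4Minor G) {u v : V}
    (huv : u ≠ v) {I J K : Set V} (hI : IsLinkingSet G u v I) (hJ : IsLinkingSet G u v J)
    (hK : IsLinkingSet G u v K) (hIJ : Disjoint I J) (hIK : Disjoint I K) (hJK : Disjoint J K) :
    3 ≤ Nat.card (G.induce {w : V | w ≠ u ∧ w ≠ v}).ConnectedComponent := by
  obtain ⟨x, hx⟩ := hI.exists_mem
  obtain ⟨y, hy⟩ := hJ.exists_mem
  obtain ⟨z, hz⟩ := hK.exists_mem
  have hxy := connectedComponentMk_ne_of_hasThirdLink hsp huv hI hJ hIJ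
    (Or.inr ⟨K, hK, hIK, hJK⟩) hx hy
  have hxz := connectedComponentMk_ne_of_hasThirdLink hsp huv hI hK hIK
    (Or.inr ⟨J, hJ, hIJ, hJK.symm⟩) hx hz
  have hyz := connectedComponentMk_ne_of_hasThirdLink hsp huv hJ hK hJK
    (Or.inr ⟨I, hI, hIJ.symm, hIK.symm⟩) hy hz
  exact Set.ncard_eq_three.2 ⟨_, _, _, hxy, hxz, hyz, rfl⟩ ▸ Set.ncard_le_card _

lemma eq_or_isLinkingSet_of_isPath {w x s : V} {p : G.Walk x s} (hp : p.IsPath)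
    (hws : G.Adj w s) (hw : w ∉ p.support) :
    s = x ∨ IsLinkingSet G w x {t | t ∈ p.support.tail} := by
  cases p with
  | nil => exact Or.inl rfl
  | cons h q =>
    rw [Walk.cons_isPath_iff] at hp
    rw [Walk.support_cons, List.mem_cons, not_or] at hw
    simp only [Walk.support_cons, List.tail_cons]
    exact Or.inr ⟨hw.2, hp.2, q.connected_induce_support, ⟨s, q.end_mem_support, hws⟩,
      ⟨_, q.start_mem_support, h⟩⟩

lemma exists_links_of_isPath_of_mem_support {w a b x : V}
    {P : G.Walk a b} (hP : P.IsPath) (hx : x ∈ P.support) (ha : G.Adj w a) (hb : G.Adj w b)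
    (hw : w ∉ P.support) :
    ∃ A B : Set V, A ⊆ {t | t ∈ P.support} ∧ B ⊆ {t | t ∈ P.support} ∧
      Disjoint A B ∧ (a = x ∨ IsLinkingSet G w x A) ∧ (b = x ∨ IsLinkingSet G w x B) := by
  obtain ⟨q₁, q₂, hq₁, hq₂, rfl⟩ := hP.mem_support_iff_exists_append.1 hx
  have hsupp := Walk.support_append q₁ q₂
  have hA : ∀ t ∈ q₁.reverse.support.tail, t ∈ q₁.support := fun t ht => by
    simpa using List.mem_of_mem_tail ht
  refine ⟨{t | t ∈ q₁.reverse.support.tail}, {t | t ∈ q₂.support.tail}, fun t ht => ?_,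
    fun t ht => ?_, ?_, eq_or_isLinkingSet_of_isPath hq₁.reverse ha fun h => ?_,
    eq_or_isLinkingSet_of_isPath hq₂ hb fun h => ?_⟩
  · simp [hsupp, hA t ht]
  · simp [hsupp, show t ∈ q₂.support.tail from ht]
  · have hnodup := hP.support_nodup
    rw [hsupp] at hnodup
    exact Set.disjoint_left.2 fun t ht ht' =>
      List.disjoint_of_nodup_append hnodup (hA t ht) ht'
  · exact hw (Walk.support_subset_support_append_left _ _ (by simpa using h))
  · exact hw (Walk.support_subset_support_append_right _ _ h)

lemma exists_mem_eq_or_isLinkingSet {w a d : V} {T : Set V}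
    (hconn : (G.induce {t | t ≠ w}).Connected) (ha : a ∈ T) (hwT : w ∉ T) (hwd : G.Adj w d) :
    ∃ x ∈ T, d = x ∨ ∃ K, IsLinkingSet G w x K ∧ Disjoint K T := by
  by_cases hd : d ∈ T
  · exact ⟨d, hd, Or.inl rfl⟩
  obtain ⟨p, hp⟩ := (hconn.preconnected ⟨d, hwd.ne'⟩
    ⟨a, ne_of_mem_of_not_mem ha hwT⟩).exists_walk_of_induce
  obtain ⟨K, hdK, hKw, hKT, hK, y, hy, x, hx, hyx⟩ :=
    exists_connected_superset_adj_of_walk (connected_induce_singleton d)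
      (Set.singleton_subset_iff.2 hwd.ne') (Set.disjoint_singleton_left.2 hd) p rfl ha hp
  exact ⟨x, hx, Or.inr ⟨K, ⟨fun h => hKw h rfl, hKT.notMem_of_mem_right hx, hK,
    ⟨d, hdK rfl, hwd⟩, ⟨y, hy, hyx.symm⟩⟩, hKT⟩⟩

lemma exists_links_of_three_adj {w a b d : V} (hconn : (G.induce {t | t ≠ w}).Connected)
    (ha : G.Adj w a) (hb : G.Adj w b) (hd : G.Adj w d) (hab : a ≠ b) (had : a ≠ d)
    (hbd : b ≠ d) :
    ∃ x, w ≠ x ∧ ∃ I J, IsLinkingSet G w x I ∧ IsLinkingSet G w x J ∧ Disjoint I J ∧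
      HasThirdLink G w x I J := by
  obtain ⟨P, hP, hPw⟩ : ∃ P : G.Walk a b, P.IsPath ∧ w ∉ P.support := by
    obtain ⟨p, hp⟩ := (hconn.preconnected ⟨a, ha.ne'⟩ ⟨b, hb.ne'⟩).exists_walk_of_induce
    exact ⟨p.bypass, p.bypass_isPath, fun h => hp w (p.support_bypass_subset_support h) rfl⟩
  obtain ⟨x, hxP, hdx⟩ :=
    exists_mem_eq_or_isLinkingSet (T := {t | t ∈ P.support}) hconn P.start_mem_support hPw hd
  obtain ⟨A, B, hAP, hBP, hAB, hA, hB⟩ := exists_links_of_isPath_of_mem_support hP hxP ha hb hPw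
  refine ⟨x, fun h => hPw (h ▸ hxP), ?_⟩
  rcases hA with rfl | hA
  · obtain ⟨K, hK, hKP⟩ := hdx.resolve_left had.symm
    exact ⟨B, K, hB.resolve_left hab.symm, hK, hKP.symm.mono_left hBP, Or.inl ha⟩
  rcases hB with rfl | hB
  · obtain ⟨K, hK, hKP⟩ := hdx.resolve_left hbd.symm
    exact ⟨A, K, hA, hK, hKP.symm.mono_left hAP, Or.inl hb⟩
  refine ⟨A, B, hA, hB, hAB, ?_⟩
  rcases hdx with rfl | ⟨K, hK, hKP⟩
  · exact Or.inl hd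
  · exact Or.inr ⟨K, hK, hKP.symm.mono_left hAP, hKP.symm.mono_left hBP⟩

lemma TwoConnected.two_le_degree [Fintype V] (h : TwoConnected G) (w : V) : 2 ≤ G.degree w := by
  obtain ⟨hcard, hconn, hdel⟩ := h
  have : Nontrivial V := Fintype.one_lt_card_iff_nontrivial.1 (by omega)
  obtain ⟨n, hwn⟩ := hconn.preconnected.exists_adj_of_nontrivial w
  have : Nontrivial {t | t ≠ n} := by
    rw [← Fintype.one_lt_card_iff_nontrivial]
    simp [Finset.filter_ne']
    omega
  obtain ⟨⟨n', hn'⟩, hwn'⟩ := (hdel n).preconnected.exists_adj_of_nontrivial ⟨w, hwn.ne⟩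
  rw [← card_neighborFinset_eq_degree]
  exact Finset.one_lt_card.2
    ⟨n, by simpa using hwn, n', by simpa using hwn', fun h => hn' h.symm⟩

lemma TwoConnected.exists_links [Fintype V] (h : TwoConnected G) {w : V}
    (hw : 3 ≤ G.degree w) :
    ∃ x, w ≠ x ∧ ∃ I J, IsLinkingSet G w x I ∧ IsLinkingSet G w x J ∧ Disjoint I J ∧
      HasThirdLink G w x I J := by
  rw [← card_neighborFinset_eq_degree] at hw
  obtain ⟨a, ha, b, hb, d, hd, hab, had, hbd⟩ := Finset.two_lt_card.1 hw
  rw [mem_neighborFinset] at ha hb hd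
  exact exists_links_of_three_adj (h.2.2 w) ha hb hd hab had hbd

end Links

variable {V : Type} [Fintype V] [DecidableEq V]

theorem twoConnected_sp_ring_or_strictTwoCut_general
    (G : SimpleGraph V) (hsp : ¬ HasK4Minor G) (h2 : TwoConnected G) :
    (G.Connected ∧ ∀ v : V, G.degree v = 2) ∨ ∃ u v : V, StrictTwoCut G u v := by
  by_cases hring : ∀ v, G.degree v = 2
  · exact Or.inl ⟨h2.2.1, hring⟩
  obtain ⟨w, hw⟩ := not_forall.1 hring
  obtain ⟨x, hwx, I, J, hI, hJ, hIJ, hthird⟩ :=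
    h2.exists_links (lt_of_le_of_ne (h2.two_le_degree w) (Ne.symm hw))
  have hcomp := two_le_card_connectedComponent hsp hwx hI hJ hIJ hthird
  refine Or.inr ⟨w, x, hwx, hcomp, ?_⟩
  by_cases hadj : G.Adj w x
  · rw [if_pos hadj]
    omega
  · obtain ⟨K, hK, hIK, hJK⟩ := hthird.resolve_left hadj
    rw [if_neg hadj]
    exact three_le_card_connectedComponent hsp hwx hI hJ hK hIJ hIK hJK

/-- A 2-node-connected series-parallel capacitated graph is either a
capacitated ring or has a strict 2-cut. -/
theorem twoConnected_sp_ring_or_strictTwoCut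
    (G : SimpleGraph V) (c : V → V → ℚ) (hc : IsIntWeight G c)
    (hsp : ¬ HasK4Minor G) (h2 : TwoConnected G) :
    (G.Connected ∧ ∀ v : V, G.degree v = 2) ∨ ∃ u v : V, StrictTwoCut G u v :=
  twoConnected_sp_ring_or_strictTwoCut_general G hsp h2

end FlowCut
end

section
/- Let u,v be a pair of nodes in a series-parallel graph G, and let {l,r} be a 2-cut separating u from v. Let L be a central set containing l but none of u, r, v, and let R be a central set containing r but none of u, l, v. Then L∖R and R∖L are central. -/
open scoped Classical

namespace FlowCut

variable {V : Type} [Fintype V] [DecidableEq V]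

/-- A set `S` is central if both `G[S]` and `G[V ∖ S]` are connected. -/
def Central (G : SimpleGraph V) (S : Finset V) : Prop :=
  (G.induce (↑S : Set V)).Connected ∧ (G.induce (↑(Sᶜ) : Set V)).Connected

/-- The pair `{l, r}` separates `u` from `v`: every `u`–`v` walk in `G` meets `l` or `r`,
i.e. `u` and `v` lie in different components of `G − {l, r}`. -/
def SepPair (G : SimpleGraph V) (l r u v : V) : Prop :=
  ∀ p : G.Walk u v, l ∈ p.support ∨ r ∈ p.support

end FlowCut

/-!
Suppose `G[L ∖ R]` is disconnected: some `c ∈ L ∖ R` lies outside the component `C` of `l`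
in `L ∖ R`. Let `P` be the component of `r` in `R ∖ L`. Walking inside `G[V ∖ R]`, `G[L]`,
`G[V ∖ L]` or `G[R]` towards `l` or `r` and stopping at the first vertex of `C ∪ P`, one
finds inside the component of `c` in `G − (C ∪ P)` two disjoint adjacent connected sets, one
avoiding `R` and one containing a vertex of `R`, each adjacent to both `C` and `P`. Since
`{l, r}` separates `u` from `v`, one of `u`, `v` lies in a component `K` of `G − (C ∪ P)`
other than that of `c`, and `K` is adjacent to `C` and to `P` as well. These two sets, `C ∪ K` and `P` are the branch
sets of a `K₄` minor. The complement of `L ∖ R` is `(V ∖ L) ∪ R`, a union of two connected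
sets sharing `r`.
-/

namespace FlowCut

open SimpleGraph

section ReachIn

variable {V : Type*} (G : SimpleGraph V)

def ReachIn (S : Set V) (x y : V) : Prop :=
  ∃ p : G.Walk x y, ∀ z ∈ p.support, z ∈ S

def componentIn (S : Set V) (x : V) : Set V := {y | ReachIn G S x y}

def AdjSets (A B : Set V) : Prop := ∃ a ∈ A, ∃ b ∈ B, G.Adj a b

variable {G} {S T : Set V} {x y z : V}

theorem ReachIn.refl (hx : x ∈ S) : ReachIn G S x x :=
  ⟨.nil, by simpa using hx⟩

theorem ReachIn.of_adj (hx : x ∈ S) (hy : y ∈ S) (hxy : G.Adj x y) : ReachIn G S x y :=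
  ⟨hxy.toWalk, by simp [hx, hy]⟩

theorem ReachIn.mem_right (h : ReachIn G S x y) : y ∈ S :=
  h.elim fun p hp => hp y p.end_mem_support

theorem ReachIn.symm (h : ReachIn G S x y) : ReachIn G S y x :=
  h.elim fun p hp => ⟨p.reverse, by simpa using hp⟩

theorem ReachIn.trans (h : ReachIn G S x y) (h' : ReachIn G S y z) : ReachIn G S x z := by
  obtain ⟨p, hp⟩ := h
  obtain ⟨q, hq⟩ := h'
  exact ⟨p.append q, fun w hw => (Walk.mem_support_append_iff p q).1 hw |>.elim (hp w) (hq w)⟩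

theorem ReachIn.mono (hST : S ⊆ T) (h : ReachIn G S x y) : ReachIn G T x y :=
  h.elim fun p hp => ⟨p, fun w hw => hST (hp w hw)⟩

theorem ReachIn.of_connected_induce (h : (G.induce S).Connected) (hx : x ∈ S) (hy : y ∈ S) :
    ReachIn G S x y := by
  obtain ⟨p⟩ := h.preconnected ⟨x, hx⟩ ⟨y, hy⟩
  refine ⟨p.map (Embedding.induce S).toHom, fun z hz => ?_⟩
  obtain ⟨w, -, rfl⟩ := List.mem_map.1 (Walk.support_map _ p ▸ hz)
  exact w.2

theorem connected_induce_of_forall_reachIn (hx : x ∈ S) (h : ∀ y ∈ S, ReachIn G S x y) :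
    (G.induce S).Connected := by
  have hreach : ∀ y : S, (G.induce S).Reachable ⟨x, hx⟩ y := fun y =>
    (h y y.2).elim fun p hp => (p.induce S hp).reachable
  exact (connected_iff_exists_forall_reachable _).2 ⟨_, hreach⟩

theorem componentIn_subset : componentIn G S x ⊆ S := fun _ h => h.mem_right

theorem mem_componentIn_self (hx : x ∈ S) : x ∈ componentIn G S x := ReachIn.refl hx

theorem mem_componentIn_of_adj (hy : y ∈ componentIn G S x) (hz : z ∈ S) (hyz : G.Adj y z) :
    z ∈ componentIn G S x :=
  ReachIn.trans hy (.of_adj hy.mem_right hz hyz)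

theorem componentIn_mono (hST : S ⊆ T) : componentIn G S x ⊆ componentIn G T x :=
  fun _ h => h.mono hST

theorem componentIn_subset_of_reachIn (h : ReachIn G S x y) :
    componentIn G S y ⊆ componentIn G S x :=
  fun _ hz => h.trans hz

theorem disjoint_componentIn (h : ¬ ReachIn G S x y) :
    Disjoint (componentIn G S x) (componentIn G S y) :=
  Set.disjoint_left.2 fun _ hx hy => h (ReachIn.trans hx (ReachIn.symm hy))

theorem ReachIn.reachIn_componentIn (h : ReachIn G S x y) :
    ReachIn G (componentIn G S x) x y := by
  obtain ⟨p, hp⟩ := h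
  refine ⟨p, fun z hz => ?_⟩
  obtain ⟨q, r, rfl⟩ := Walk.mem_support_iff_exists_append.1 hz
  exact ⟨q, fun w hw => hp w ((Walk.mem_support_append_iff q r).2 (.inl hw))⟩

theorem connected_induce_componentIn (hx : x ∈ S) : (G.induce (componentIn G S x)).Connected :=
  connected_induce_of_forall_reachIn (mem_componentIn_self hx) fun _ hy => hy.reachIn_componentIn

theorem ReachIn.exists_adj_of_mem {W B : Set V} {t : V} (h : ReachIn G W x t) (hx : x ∉ B)
    (ht : t ∈ B) : ∃ a ∈ componentIn G (W \ B) x, ∃ b ∈ W ∩ B, G.Adj a b := by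
  obtain ⟨p, hp⟩ := h
  have htK : t ∉ componentIn G (W \ B) x := fun htK => (componentIn_subset htK).2 ht
  have hxK : x ∈ componentIn G (W \ B) x :=
    mem_componentIn_self ⟨hp x p.start_mem_support, hx⟩
  obtain ⟨d, hd, hfst, hsnd⟩ := p.exists_boundary_dart _ hxK htK
  have hW : d.snd ∈ W := hp _ (p.dart_snd_mem_support_of_mem_darts hd)
  by_cases hB : d.snd ∈ B
  · exact ⟨d.fst, hfst, d.snd, ⟨hW, hB⟩, d.adj⟩
  · exact (hsnd (mem_componentIn_of_adj hfst ⟨hW, hB⟩ d.adj)).elim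

theorem exists_adj_componentIn_of_reachIn {W A D : Set V} {t : V} (ht : t ∈ A)
    (hW : ReachIn G W x t) (hD : Disjoint W D) (hx : x ∉ componentIn G A t ∪ D) :
    ∃ a ∈ componentIn G (W \ (componentIn G A t ∪ D)) x, a ∉ A ∧
      ∃ b ∈ componentIn G A t, G.Adj a b := by
  obtain ⟨a, ha, b, ⟨hbW, hb⟩, hab⟩ :=
    hW.exists_adj_of_mem hx (.inl (mem_componentIn_self ht))
  have hbC : b ∈ componentIn G A t := hb.resolve_right (Set.disjoint_left.1 hD hbW)
  refine ⟨a, ha, fun haA => ?_, b, hbC, hab⟩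
  exact (componentIn_subset ha).2 (.inl (mem_componentIn_of_adj hbC haA hab.symm))

theorem AdjSets.symm {A B : Set V} (h : AdjSets G A B) : AdjSets G B A :=
  let ⟨a, ha, b, hb, hab⟩ := h; ⟨b, hb, a, ha, hab.symm⟩

theorem AdjSets.mono {A A' B B' : Set V} (hA : A ⊆ A') (hB : B ⊆ B') (h : AdjSets G A B) :
    AdjSets G A' B' :=
  let ⟨a, ha, b, hb, hab⟩ := h; ⟨a, hA ha, b, hB hb, hab⟩

end ReachIn

theorem hasK4Minor_of_branchSets_s2 {V : Type} [Finite V] {G : SimpleGraph V} {A B C D : Set V}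
    (hA : (G.induce A).Connected) (hB : (G.induce B).Connected)
    (hC : (G.induce C).Connected) (hD : (G.induce D).Connected)
    (hAB : Disjoint A B) (hAC : Disjoint A C) (hAD : Disjoint A D)
    (hBC : Disjoint B C) (hBD : Disjoint B D) (hCD : Disjoint C D)
    (eAB : AdjSets G A B) (eAC : AdjSets G A C) (eAD : AdjSets G A D)
    (eBC : AdjSets G B C) (eBD : AdjSets G B D) (eCD : AdjSets G C D) : HasK4Minor G := by
  let F : Fin 4 → Set V := ![A, B, C, D]
  have hconn : ∀ i, (G.induce (F i)).Connected := by
    intro i; fin_cases i <;> assumption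
  have hdisj : ∀ i j, i ≠ j → Disjoint (F i) (F j) := by
    intro i j hij
    fin_cases i <;> fin_cases j <;>
      first | exact absurd rfl hij | assumption | exact Disjoint.symm (by assumption)
  have hadj : ∀ i j, i ≠ j → AdjSets G (F i) (F j) := by
    intro i j hij
    fin_cases i <;> fin_cases j <;>
      first | exact absurd rfl hij | assumption | exact AdjSets.symm (by assumption)
  refine ⟨fun i => (F i).toFinite.toFinset, fun i => ?_, fun i j hij => ?_, fun i => ?_,
    fun i j hij => ?_⟩
  · obtain ⟨⟨x, hx⟩⟩ := (hconn i).nonempty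
    exact ⟨x, by simpa using hx⟩
  · simpa using hdisj i j hij
  · rw [Set.Finite.coe_toFinset]
    exact hconn i
  · obtain ⟨a, ha, b, hb, hab⟩ := hadj i j hij
    exact ⟨a, by simpa using ha, b, by simpa using hb, hab⟩

section CrossingSets

variable {V : Type} {G : SimpleGraph V} {L R : Set V} {l r x : V}

variable (G) in
structure Crossing (L R : Set V) (l r : V) : Prop where
  connected_left : (G.induce L).Connected
  connected_compl_left : (G.induce Lᶜ).Connected
  connected_right : (G.induce R).Connected
  connected_compl_right : (G.induce Rᶜ).Connected
  mem_left : l ∈ L \ R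
  mem_right : r ∈ R \ L

variable (G) in
def remainder (L R : Set V) (l r : V) : Set V :=
  (componentIn G (L \ R) l ∪ componentIn G (R \ L) r)ᶜ

theorem remainder_comm : remainder G R L r l = remainder G L R l r := by
  rw [remainder, remainder, Set.union_comm]

theorem mem_remainder_of_notMem_union (hx : x ∉ L ∪ R) : x ∈ remainder G L R l r :=
  fun hxCP => hx (hxCP.imp (fun hxC => (componentIn_subset hxC).1)
    (fun hxP => (componentIn_subset hxP).1))

theorem SepPair.symm {u v : V} (h : SepPair G l r u v) : SepPair G r l u v :=
  fun p => (h p).symm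

namespace Crossing

theorem symm (h : Crossing G L R l r) : Crossing G R L r l :=
  ⟨h.connected_right, h.connected_compl_right, h.connected_left, h.connected_compl_left,
    h.mem_right, h.mem_left⟩

theorem exists_adj_left_of_notMem_right (h : Crossing G L R l r) (hxR : x ∉ R)
    (hx : x ∈ remainder G L R l r) :
    ∃ a ∈ componentIn G (Rᶜ ∩ remainder G L R l r) x, a ∉ L ∧
      ∃ b ∈ componentIn G (L \ R) l, G.Adj a b := by
  obtain ⟨a, ha, haLR, b, hb, hab⟩ := exists_adj_componentIn_of_reachIn h.mem_left
    (.of_connected_induce h.connected_compl_right hxR h.mem_left.2)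
    (Set.disjoint_left.2 fun _ hyR hyP => hyR (componentIn_subset hyP).1) hx
  exact ⟨a, ha, fun haL => haLR ⟨haL, (componentIn_subset ha).1⟩, b, hb, hab⟩

theorem exists_adj_left_of_mem_left (h : Crossing G L R l r) (hxL : x ∈ L)
    (hx : x ∈ remainder G L R l r) :
    ∃ a ∈ componentIn G (L ∩ remainder G L R l r) x, a ∈ R ∧
      ∃ b ∈ componentIn G (L \ R) l, G.Adj a b := by
  obtain ⟨a, ha, haLR, b, hb, hab⟩ := exists_adj_componentIn_of_reachIn h.mem_left
    (.of_connected_induce h.connected_left hxL h.mem_left.1)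
    (Set.disjoint_left.2 fun _ hyL hyP => (componentIn_subset hyP).2 hyL) hx
  exact ⟨a, ha, not_not.1 fun haR => haLR ⟨(componentIn_subset ha).1, haR⟩, b, hb, hab⟩

theorem exists_adj_right_of_notMem_left (h : Crossing G L R l r) (hxL : x ∉ L)
    (hx : x ∈ remainder G L R l r) :
    ∃ a ∈ componentIn G (Lᶜ ∩ remainder G L R l r) x, a ∉ R ∧
      ∃ b ∈ componentIn G (R \ L) r, G.Adj a b := by
  rw [← remainder_comm] at hx ⊢
  exact h.symm.exists_adj_left_of_notMem_right hxL hx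

theorem exists_adj_right_of_mem_right (h : Crossing G L R l r) (hxR : x ∈ R)
    (hx : x ∈ remainder G L R l r) :
    ∃ a ∈ componentIn G (R ∩ remainder G L R l r) x, a ∈ L ∧
      ∃ b ∈ componentIn G (R \ L) r, G.Adj a b := by
  rw [← remainder_comm] at hx ⊢
  exact h.symm.exists_adj_left_of_mem_left hxR hx

theorem exists_branchSets (h : Crossing G L R l r) {c : V} (hc : c ∈ L \ R)
    (hcΩ : c ∈ remainder G L R l r) :
    ∃ S₁ S₂ : Set V, S₁ ⊆ componentIn G (remainder G L R l r) c ∧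
      S₂ ⊆ componentIn G (remainder G L R l r) c ∧ Disjoint S₁ S₂ ∧
      (G.induce S₁).Connected ∧ (G.induce S₂).Connected ∧ AdjSets G S₁ S₂ ∧
      AdjSets G S₁ (componentIn G (L \ R) l) ∧ AdjSets G S₁ (componentIn G (R \ L) r) ∧
      AdjSets G S₂ (componentIn G (L \ R) l) ∧ AdjSets G S₂ (componentIn G (R \ L) r) := by
  set Ω := remainder G L R l r
  obtain ⟨y, hy, hyL, -⟩ := h.exists_adj_left_of_notMem_right hc.2 hcΩ
  obtain ⟨w, hw, hwR, bw, hbw, hwbw⟩ :=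
    h.exists_adj_right_of_notMem_left hyL (componentIn_subset hy).2
  have hwΩ : w ∈ Ω := (componentIn_subset hw).2
  set S₂ := componentIn G (Rᶜ ∩ Ω) w
  have hwS₂ : w ∈ S₂ := mem_componentIn_self ⟨hwR, hwΩ⟩
  have hS₂R : S₂ ⊆ Rᶜ := componentIn_subset.trans Set.inter_subset_left
  obtain ⟨y', hy', -, by', hby', hy'by'⟩ := h.exists_adj_left_of_notMem_right hwR hwΩ
  obtain ⟨p, hp, hpR, bp, hbp, hpbp⟩ := h.exists_adj_left_of_mem_left hc.1 hcΩ
  have hpΩ : p ∈ Ω := (componentIn_subset hp).2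
  have hpS₂ : p ∉ S₂ := fun hpS₂ => hS₂R hpS₂ hpR
  obtain ⟨q, hq, -, bq, hbq, hqbq⟩ := h.exists_adj_right_of_mem_right hpR hpΩ
  set S₁ := componentIn G (Ω \ S₂) p
  have hpS₁ : p ∈ S₁ := mem_componentIn_self ⟨hpΩ, hpS₂⟩
  have hqS₁ : q ∈ S₁ := componentIn_mono (S := R ∩ Ω) (T := Ω \ S₂)
    (fun z hz => ⟨hz.2, fun hzS₂ => hS₂R hzS₂ hz.1⟩) hq
  have hcp : ReachIn G Ω c p := hp.mono Set.inter_subset_right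
  have hcw : ReachIn G Ω c w :=
    (hy.mono Set.inter_subset_right).trans (hw.mono Set.inter_subset_right)
  obtain ⟨a, ha, b, ⟨-, hb⟩, hab⟩ := (hcp.symm.trans hcw).exists_adj_of_mem hpS₂ hwS₂
  refine ⟨S₁, S₂,
    (componentIn_mono Set.sdiff_subset).trans (componentIn_subset_of_reachIn hcp),
    (componentIn_mono Set.inter_subset_right).trans (componentIn_subset_of_reachIn hcw),
    Set.disjoint_left.2 fun z hz => (componentIn_subset hz).2,
    connected_induce_componentIn ⟨hpΩ, hpS₂⟩, connected_induce_componentIn ⟨hwR, hwΩ⟩,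
    ⟨a, ha, b, hb, hab⟩, ⟨p, hpS₁, bp, hbp, hpbp⟩,
    ⟨q, hqS₁, bq, hbq, hqbq⟩, ⟨y', hy', by', hby', hy'by'⟩,
    ⟨w, hwS₂, bw, hbw, hwbw⟩⟩

theorem adjSets_componentIn_remainder (h : Crossing G L R l r) (hx : x ∉ L ∪ R) :
    AdjSets G (componentIn G (remainder G L R l r) x) (componentIn G (L \ R) l) ∧
      AdjSets G (componentIn G (remainder G L R l r) x) (componentIn G (R \ L) r) := by
  have hxΩ := mem_remainder_of_notMem_union (l := l) (r := r) (G := G) hx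
  obtain ⟨a, ha, -, b, hb, hab⟩ :=
    h.exists_adj_left_of_notMem_right (fun hxR => hx (.inr hxR)) hxΩ
  obtain ⟨a', ha', -, b', hb', ha'b'⟩ :=
    h.exists_adj_right_of_notMem_left (fun hxL => hx (.inl hxL)) hxΩ
  exact ⟨⟨a, componentIn_mono Set.inter_subset_right ha, b, hb, hab⟩,
    ⟨a', componentIn_mono Set.inter_subset_right ha', b', hb', ha'b'⟩⟩

theorem exists_far_componentIn_remainder (h : Crossing G L R l r) {u v : V}
    (hsep : SepPair G l r u v) (hu : u ∉ L ∪ R) (hv : v ∉ L ∪ R) (c : V) :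
    ∃ x ∈ remainder G L R l r, ¬ ReachIn G (remainder G L R l r) c x ∧
      AdjSets G (componentIn G (remainder G L R l r) x) (componentIn G (L \ R) l) ∧
      AdjSets G (componentIn G (remainder G L R l r) x) (componentIn G (R \ L) r) := by
  have huv : ¬ ReachIn G (remainder G L R l r) u v := by
    rintro ⟨p, hp⟩
    rcases hsep p with hl | hr
    · exact hp l hl (.inl (mem_componentIn_self h.mem_left))
    · exact hp r hr (.inr (mem_componentIn_self h.mem_right))
  obtain ⟨x, hx, hcx⟩ : ∃ x ∉ L ∪ R, ¬ ReachIn G (remainder G L R l r) c x := by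
    by_cases hcu : ReachIn G (remainder G L R l r) c u
    · exact ⟨v, hv, fun hcv => huv (hcu.symm.trans hcv)⟩
    · exact ⟨u, hu, hcu⟩
  exact ⟨x, mem_remainder_of_notMem_union hx, hcx, h.adjSets_componentIn_remainder hx⟩

theorem connected_induce_sdiff [Finite V] (h : Crossing G L R l r) (hsp : ¬ HasK4Minor G)
    {u v : V} (hsep : SepPair G l r u v) (hu : u ∉ L ∪ R) (hv : v ∉ L ∪ R) :
    (G.induce (L \ R)).Connected := by
  suffices hsub : L \ R ⊆ componentIn G (L \ R) l by
    rw [← componentIn_subset.antisymm hsub]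
    exact connected_induce_componentIn h.mem_left
  intro c hc
  by_contra hcC
  set C := componentIn G (L \ R) l
  set P := componentIn G (R \ L) r
  set Ω := remainder G L R l r
  have hcΩ : c ∈ Ω := fun hcCP => hcCP.elim hcC fun hcP => hc.2 (componentIn_subset hcP).1
  obtain ⟨S₁, S₂, hS₁, hS₂, h12, hS₁c, hS₂c, e12, e1C, e1P, e2C, e2P⟩ :=
    h.exists_branchSets hc hcΩ
  obtain ⟨x, hx, hcx, eKC, eKP⟩ := h.exists_far_componentIn_remainder hsep hu hv c
  set K := componentIn G Ω x
  have hΩC : Disjoint Ω C := disjoint_compl_left.mono_right Set.subset_union_left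
  have hΩP : Disjoint Ω P := disjoint_compl_left.mono_right Set.subset_union_right
  have hCP : Disjoint C P := disjoint_sdiff_sdiff.mono componentIn_subset componentIn_subset
  have hS₁K : Disjoint S₁ K := (disjoint_componentIn hcx).mono_left hS₁
  have hS₂K : Disjoint S₂ K := (disjoint_componentIn hcx).mono_left hS₂
  have hS₁Ω : S₁ ⊆ Ω := hS₁.trans componentIn_subset
  have hS₂Ω : S₂ ⊆ Ω := hS₂.trans componentIn_subset
  have hCK : (G.induce (C ∪ K)).Connected := by
    obtain ⟨a, ha, b, hb, hab⟩ := eKC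
    exact connected_induce_union (connected_induce_componentIn h.mem_left).preconnected
      (connected_induce_componentIn hx).preconnected hb ha hab.symm
  refine hsp (hasK4Minor_of_branchSets_s2 hS₁c hS₂c hCK (connected_induce_componentIn h.mem_right)
    h12 (Set.disjoint_union_right.2 ⟨hΩC.mono_left hS₁Ω, hS₁K⟩) (hΩP.mono_left hS₁Ω)
    (Set.disjoint_union_right.2 ⟨hΩC.mono_left hS₂Ω, hS₂K⟩) (hΩP.mono_left hS₂Ω)
    (Set.disjoint_union_left.2 ⟨hCP, hΩP.mono_left componentIn_subset⟩)
    e12 (e1C.mono le_rfl Set.subset_union_left) e1P (e2C.mono le_rfl Set.subset_union_left)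
    e2P (eKP.mono Set.subset_union_right le_rfl))

theorem connected_induce_compl_sdiff (h : Crossing G L R l r) :
    (G.induce (L \ R)ᶜ).Connected := by
  rw [Set.compl_sdiff, Set.union_comm]
  exact induce_union_connected h.connected_compl_left.preconnected
    h.connected_right.preconnected ⟨r, h.mem_right.2, h.mem_right.1⟩

end Crossing

end CrossingSets

variable {V : Type} [Fintype V] [DecidableEq V]

theorem central_sdiff_of_central_general
    (G : SimpleGraph V) (hsp : ¬ HasK4Minor G)
    (u v l r : V)
    (hsep : SepPair G l r u v)
    (L R : Finset V)
    (hL : Central G L) (hlL : l ∈ L) (huL : u ∉ L) (hrL : r ∉ L) (hvL : v ∉ L)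
    (hR : Central G R) (hrR : r ∈ R) (huR : u ∉ R) (hlR : l ∉ R) (hvR : v ∉ R) :
    Central G (L \ R) ∧ Central G (R \ L) := by
  unfold Central at hL hR ⊢
  rw [Finset.coe_compl] at hL hR
  rw [Finset.coe_compl, Finset.coe_compl, Finset.coe_sdiff, Finset.coe_sdiff]
  have h : Crossing G L R l r := ⟨hL.1, hL.2, hR.1, hR.2, ⟨hlL, hlR⟩, ⟨hrR, hrL⟩⟩
  have hu : u ∉ (L ∪ R : Set V) := by simp [huL, huR]
  have hv : v ∉ (L ∪ R : Set V) := by simp [hvL, hvR]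
  refine ⟨⟨h.connected_induce_sdiff hsp hsep hu hv, h.connected_induce_compl_sdiff⟩,
    ⟨?_, h.symm.connected_induce_compl_sdiff⟩⟩
  rw [Set.union_comm] at hu hv
  exact h.symm.connected_induce_sdiff hsp hsep.symm hu hv

/-- If `{l, r}` is a 2-cut separating `u` from `v` in a series-parallel
graph, `L` is central containing `l` but none of `u, r, v`, and `R` is central containing
`r` but none of `u, l, v`, then `L ∖ R` and `R ∖ L` are central. -/
theorem central_sdiff_of_central
    (G : SimpleGraph V) (hsp : ¬ HasK4Minor G)
    (u v l r : V) (hul : u ≠ l) (hur : u ≠ r) (hvl : v ≠ l) (hvr : v ≠ r) (hlr : l ≠ r)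
    (hsep : SepPair G l r u v)
    (L R : Finset V)
    (hL : Central G L) (hlL : l ∈ L) (huL : u ∉ L) (hrL : r ∉ L) (hvL : v ∉ L)
    (hR : Central G R) (hrR : r ∈ R) (huR : u ∉ R) (hlR : l ∉ R) (hvR : v ∉ R) :
    Central G (L \ R) ∧ Central G (R \ L) :=
  central_sdiff_of_central_general G hsp u v l r hsep L R hL hlL huL hrL hvL hR hrR huR hlR hvR

end FlowCut
end

section
/- Let D be a demand matrix on a graph G and f : V → V a mapping. If the cut condition is satisfied for D in G, and D'_f is routable in γ·G (the graph G with all capacities multiplied by γ), then the cut condition is satisfied for D_f in (γ+1)·G. -/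
open scoped Classical

namespace FlowCut

variable {V : Type} [Fintype V] [DecidableEq V]

/-- Total weight of a symmetric weight function across the cut determined by `S`. -/
def cutW (w : V → V → ℚ) (S : Finset V) : ℚ := ∑ u ∈ S, ∑ v ∈ Sᶜ, w u v

/-- The cut condition: every cut has at least as much capacity as demand. -/
def CutCond (c d : V → V → ℚ) : Prop := ∀ S : Finset V, cutW d S ≤ cutW c S

/-- `c` is a positive (rational) weighting of the edges of `G` (zero on non-edges). -/
def IsPosWeight (G : SimpleGraph V) (c : V → V → ℚ) : Prop :=
  (∀ u v, c u v = c v u) ∧ (∀ u v, G.Adj u v → 0 < c u v) ∧ (∀ u v, ¬ G.Adj u v → c u v = 0)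

/-- Total flow of the path system `f` through the edge `{x, y}`. -/
noncomputable def edgeFlow (G : SimpleGraph V) (f : ∀ u v : V, G.Path u v → ℚ) (x y : V) : ℚ :=
  ∑ u : V, ∑ v : V, ∑ p : G.Path u v, if s(x, y) ∈ (p : G.Walk u v).edges then f u v p else 0

/-- `f` is a fractional routing of the (symmetric) demands `d` in `G` with capacities `c` and
congestion `α`: flows are nonnegative, each demand `d u v` is met by flow on `u`–`v` paths,
and the total flow through each edge is at most `α` times its capacity. -/
def IsRouting (G : SimpleGraph V) (c d : V → V → ℚ) (α : ℚ)
    (f : ∀ u v : V, G.Path u v → ℚ) : Prop :=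
  (∀ u v p, 0 ≤ f u v p) ∧
  (∀ u v : V, ((∑ p : G.Path u v, f u v p) + ∑ p : G.Path v u, f v u p) = d u v) ∧
  (∀ x y : V, edgeFlow G f x y ≤ α * c x y)

/-- The routing `f` is integral: every path carries an integer amount of flow. -/
def Integral (G : SimpleGraph V) (f : ∀ u v : V, G.Path u v → ℚ) : Prop :=
  ∀ u v p, ∃ n : ℕ, f u v p = n

/-- The demand matrix `D_f`: `D_f x y = ∑_{u v : f u = x, f v = y} D u v`. -/
def pushDemand (D : V → V → ℚ) (f : V → V) (x y : V) : ℚ :=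
  ∑ u : V, ∑ v : V, if f u = x ∧ f v = y then D u v else 0

/-- The demand matrix `D'_f`, asking each node `u` to send `∑ v, D u v` to `f u`
(all other entries are zero). -/
def moveDemand (D : V → V → ℚ) (f : V → V) (a b : V) : ℚ :=
  if a = b then (if f a = a then ∑ v : V, D a v else 0)
  else (if f a = b then ∑ v : V, D a v else 0) + (if f b = a then ∑ v : V, D b v else 0)

set_option linter.unusedSectionVars false in
lemma walk_cross (G : SimpleGraph V) (S : Finset V) :
    ∀ {u v : V} (w : G.Walk u v), u ∈ S → v ∉ S →
      ∃ x ∈ S, ∃ y, y ∉ S ∧ s(x, y) ∈ w.edges := by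
  intro u v w
  induction w with
  | nil => intro hu hv; exact absurd hu hv
  | @cons a b c h p ih =>
    intro hu hv
    by_cases hb : b ∈ S
    · obtain ⟨x, hx, y, hy, hm⟩ := ih hb hv
      exact ⟨x, hx, y, hy, by simp [hm]⟩
    · exact ⟨a, hu, b, hb, by simp⟩

lemma routing_le_cut (G : SimpleGraph V) (c d : V → V → ℚ) (α : ℚ)
    (g : ∀ u v : V, G.Path u v → ℚ) (hg : IsRouting G c d α g) (S : Finset V) :
    cutW d S ≤ α * cutW c S := by
  obtain ⟨hnn, hdem, hcap⟩ := hg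
  set h : V → V → ℚ := fun a b =>
    ∑ p : G.Path a b, ∑ x ∈ S, ∑ y ∈ Sᶜ,
      (if s(x, y) ∈ (p : G.Walk a b).edges then g a b p else 0) with hh
  have term_nn : ∀ a b (p : G.Path a b) (z : V × V),
      0 ≤ (if s(z.1, z.2) ∈ (p : G.Walk a b).edges then g a b p else 0) := by
    intro a b p z
    split_ifs
    · exact hnn a b p
    · exact le_rfl
  have h_nonneg : ∀ a b, 0 ≤ h a b := by
    intro a b
    refine Finset.sum_nonneg fun p _ => Finset.sum_nonneg fun x _ =>
      Finset.sum_nonneg fun y _ => term_nn a b p (x, y)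
  have h_lower : ∀ a b, a ∈ S → b ∉ S → (∑ p : G.Path a b, g a b p) ≤ h a b := by
    intro a b ha hb
    refine Finset.sum_le_sum fun p _ => ?_
    obtain ⟨x, hx, y, hy, hm⟩ := walk_cross G S (p : G.Walk a b) ha hb
    rw [← Finset.sum_product']
    have hmem : (x, y) ∈ S ×ˢ Sᶜ := Finset.mem_product.mpr ⟨hx, Finset.mem_compl.mpr hy⟩
    have := Finset.single_le_sum
      (f := fun z : V × V => if s(z.1, z.2) ∈ (p : G.Walk a b).edges then g a b p else 0)
      (fun z _ => term_nn a b p z) hmem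
    simpa [hm] using this
  have h_lower' : ∀ a b, a ∉ S → b ∈ S → (∑ p : G.Path a b, g a b p) ≤ h a b := by
    intro a b ha hb
    refine Finset.sum_le_sum fun p _ => ?_
    obtain ⟨x, hx, y, hy, hm⟩ := walk_cross G S ((p : G.Walk a b).reverse) hb ha
    rw [SimpleGraph.Walk.edges_reverse, List.mem_reverse] at hm
    rw [← Finset.sum_product']
    have hmem : (x, y) ∈ S ×ˢ Sᶜ := Finset.mem_product.mpr ⟨hx, Finset.mem_compl.mpr hy⟩
    have := Finset.single_le_sum
      (f := fun z : V × V => if s(z.1, z.2) ∈ (p : G.Walk a b).edges then g a b p else 0)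
      (fun z _ => term_nn a b p z) hmem
    simpa [hm] using this
  have step1 : cutW d S ≤ ∑ u ∈ S, ∑ v ∈ Sᶜ, (h u v + h v u) := by
    unfold cutW
    refine Finset.sum_le_sum fun u hu => Finset.sum_le_sum fun v hv => ?_
    rw [← hdem u v]
    exact add_le_add (h_lower u v hu (Finset.mem_compl.mp hv))
      (h_lower' v u (Finset.mem_compl.mp hv) hu)
  have step2 : (∑ u ∈ S, ∑ v ∈ Sᶜ, (h u v + h v u)) ≤ ∑ u : V, ∑ v : V, h u v := by
    rw [← Finset.sum_add_sum_compl S (fun u => ∑ v : V, h u v)]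
    simp only [Finset.sum_add_distrib]
    refine add_le_add ?_ ?_
    · exact Finset.sum_le_sum fun u _ =>
        Finset.sum_le_sum_of_subset_of_nonneg (Finset.subset_univ _) fun v _ _ => h_nonneg u v
    · rw [Finset.sum_comm]
      exact Finset.sum_le_sum fun v _ =>
        Finset.sum_le_sum_of_subset_of_nonneg (Finset.subset_univ _) fun u _ _ => h_nonneg v u
  have step3 : (∑ u : V, ∑ v : V, h u v) = ∑ x ∈ S, ∑ y ∈ Sᶜ, edgeFlow G g x y := by
    unfold edgeFlow
    simp only [hh]
    calc (∑ u : V, ∑ v : V, ∑ p : G.Path u v, ∑ x ∈ S, ∑ y ∈ Sᶜ,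
          (if s(x, y) ∈ (p : G.Walk u v).edges then g u v p else 0))
        = ∑ u : V, ∑ v : V, ∑ x ∈ S, ∑ y ∈ Sᶜ, ∑ p : G.Path u v,
          (if s(x, y) ∈ (p : G.Walk u v).edges then g u v p else 0) := by
          refine Finset.sum_congr rfl fun u _ => Finset.sum_congr rfl fun v _ => ?_
          rw [Finset.sum_comm]
          exact Finset.sum_congr rfl fun x _ => Finset.sum_comm
      _ = ∑ u : V, ∑ x ∈ S, ∑ v : V, ∑ y ∈ Sᶜ, ∑ p : G.Path u v,
          (if s(x, y) ∈ (p : G.Walk u v).edges then g u v p else 0) :=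
          Finset.sum_congr rfl fun u _ => Finset.sum_comm
      _ = ∑ x ∈ S, ∑ u : V, ∑ v : V, ∑ y ∈ Sᶜ, ∑ p : G.Path u v,
          (if s(x, y) ∈ (p : G.Walk u v).edges then g u v p else 0) := Finset.sum_comm
      _ = ∑ x ∈ S, ∑ u : V, ∑ y ∈ Sᶜ, ∑ v : V, ∑ p : G.Path u v,
          (if s(x, y) ∈ (p : G.Walk u v).edges then g u v p else 0) :=
          Finset.sum_congr rfl fun x _ => Finset.sum_congr rfl fun u _ => Finset.sum_comm
      _ = ∑ x ∈ S, ∑ y ∈ Sᶜ, ∑ u : V, ∑ v : V, ∑ p : G.Path u v,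
          (if s(x, y) ∈ (p : G.Walk u v).edges then g u v p else 0) :=
          Finset.sum_congr rfl fun x _ => Finset.sum_comm
  have step4 : (∑ x ∈ S, ∑ y ∈ Sᶜ, edgeFlow G g x y) ≤ α * cutW c S := by
    rw [cutW, Finset.mul_sum]
    refine Finset.sum_le_sum fun x _ => ?_
    rw [Finset.mul_sum]
    exact Finset.sum_le_sum fun y _ => hcap x y
  calc cutW d S ≤ ∑ u ∈ S, ∑ v ∈ Sᶜ, (h u v + h v u) := step1
    _ ≤ ∑ u : V, ∑ v : V, h u v := step2
    _ = ∑ x ∈ S, ∑ y ∈ Sᶜ, edgeFlow G g x y := step3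
    _ ≤ α * cutW c S := step4

lemma push_le (D : V → V → ℚ) (hsym : ∀ u v, D u v = D v u) (hnn : ∀ u v, 0 ≤ D u v)
    (f : V → V) (S : Finset V) :
    cutW (pushDemand D f) S ≤ cutW D S + cutW (moveDemand D f) S := by
  set T : V → ℚ := fun a => ∑ v : V, D a v with hT
  -- rewrite push cut
  have hpush : cutW (pushDemand D f) S
      = ∑ u : V, ∑ v : V, (if f u ∈ S ∧ f v ∈ Sᶜ then D u v else 0) := by
    unfold cutW pushDemand
    have inner : ∀ u v : V,
        (∑ x ∈ S, ∑ y ∈ Sᶜ, if f u = x ∧ f v = y then D u v else 0)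
          = if f u ∈ S ∧ f v ∈ Sᶜ then D u v else 0 := by
      intro u v
      rw [← Finset.sum_product']
      have e : ∀ z : V × V, (if f u = z.1 ∧ f v = z.2 then D u v else 0)
          = if (f u, f v) = z then D u v else 0 := fun z =>
        if_congr (by simp [Prod.ext_iff]) rfl rfl
      rw [Finset.sum_congr rfl fun z _ => e z, Finset.sum_ite_eq]
      simp [Finset.mem_product]
    calc (∑ x ∈ S, ∑ y ∈ Sᶜ, ∑ u : V, ∑ v : V, if f u = x ∧ f v = y then D u v else 0)
        = ∑ x ∈ S, ∑ u : V, ∑ y ∈ Sᶜ, ∑ v : V, (if f u = x ∧ f v = y then D u v else 0) :=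
          Finset.sum_congr rfl fun x _ => Finset.sum_comm
      _ = ∑ u : V, ∑ x ∈ S, ∑ y ∈ Sᶜ, ∑ v : V, (if f u = x ∧ f v = y then D u v else 0) :=
          Finset.sum_comm
      _ = ∑ u : V, ∑ x ∈ S, ∑ v : V, ∑ y ∈ Sᶜ, (if f u = x ∧ f v = y then D u v else 0) :=
          Finset.sum_congr rfl fun u _ => Finset.sum_congr rfl fun x _ => Finset.sum_comm
      _ = ∑ u : V, ∑ v : V, ∑ x ∈ S, ∑ y ∈ Sᶜ, (if f u = x ∧ f v = y then D u v else 0) :=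
          Finset.sum_congr rfl fun u _ => Finset.sum_comm
      _ = ∑ u : V, ∑ v : V, (if f u ∈ S ∧ f v ∈ Sᶜ then D u v else 0) :=
          Finset.sum_congr rfl fun u _ => Finset.sum_congr rfl fun v _ => inner u v
  -- rewrite D cut
  have hD : cutW D S = ∑ u : V, ∑ v : V, (if u ∈ S ∧ v ∈ Sᶜ then D u v else 0) := by
    unfold cutW
    have e : ∀ u : V, (∑ v : V, if u ∈ S ∧ v ∈ Sᶜ then D u v else 0)
        = if u ∈ S then (∑ v ∈ Sᶜ, D u v) else 0 := by
      intro u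
      by_cases h : u ∈ S
      · rw [if_pos h, Finset.sum_congr rfl fun v _ => if_congr (and_iff_right h) rfl rfl,
          Finset.sum_ite_mem, Finset.univ_inter]
      · simp [h]
    rw [Finset.sum_congr rfl fun u (_ : u ∈ Finset.univ) => e u,
      Finset.sum_ite_mem, Finset.univ_inter]
  -- rewrite move cut
  have hmove : cutW (moveDemand D f) S
      = (∑ a ∈ S, if f a ∈ Sᶜ then T a else 0) + (∑ b ∈ Sᶜ, if f b ∈ S then T b else 0) := by
    unfold cutW moveDemand
    have e : ∀ a ∈ S, (∑ b ∈ Sᶜ, (if a = b then (if f a = a then ∑ v : V, D a v else 0)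
        else (if f a = b then ∑ v : V, D a v else 0) + (if f b = a then ∑ v : V, D b v else 0)))
        = (if f a ∈ Sᶜ then T a else 0) + ∑ b ∈ Sᶜ, (if f b = a then T b else 0) := by
      intro a ha
      have hne : ∀ b ∈ Sᶜ, a ≠ b := fun b hb h => (Finset.mem_compl.mp hb) (h ▸ ha)
      rw [Finset.sum_congr rfl fun b hb => if_neg (hne b hb), Finset.sum_add_distrib,
        Finset.sum_ite_eq]
    rw [Finset.sum_congr rfl e, Finset.sum_add_distrib]
    congr 1
    rw [Finset.sum_comm]
    exact Finset.sum_congr rfl fun b _ => Finset.sum_ite_eq S (f b) (fun _ => T b)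
  -- pointwise inequality
  have pt : ∀ u v : V, (if f u ∈ S ∧ f v ∈ Sᶜ then D u v else 0)
      ≤ (if u ∈ S ∧ v ∈ Sᶜ then D u v else 0)
        + ((if v ∈ S ∧ f v ∈ Sᶜ then D u v else 0) + (if u ∈ Sᶜ ∧ f u ∈ S then D u v else 0)) := by
    intro u v
    have h0 := hnn u v
    simp only [Finset.mem_compl]
    split_ifs <;> first | linarith | tauto
  -- identify the two correction sums
  have hB : (∑ u : V, ∑ v : V, (if v ∈ S ∧ f v ∈ Sᶜ then D u v else 0))
      = ∑ a ∈ S, if f a ∈ Sᶜ then T a else 0 := by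
    rw [Finset.sum_comm]
    have e : ∀ v : V, (∑ u : V, if v ∈ S ∧ f v ∈ Sᶜ then D u v else 0)
        = if v ∈ S then (if f v ∈ Sᶜ then T v else 0) else 0 := by
      intro v
      by_cases h1 : v ∈ S <;> by_cases h2 : f v ∈ Sᶜ <;>
        simp [h1, h2, hT, Finset.sum_congr rfl fun u (_ : u ∈ Finset.univ) => hsym u v]
    rw [Finset.sum_congr rfl fun v (_ : v ∈ Finset.univ) => e v,
      Finset.sum_ite_mem, Finset.univ_inter]
  have hC : (∑ u : V, ∑ v : V, (if u ∈ Sᶜ ∧ f u ∈ S then D u v else 0))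
      = ∑ b ∈ Sᶜ, if f b ∈ S then T b else 0 := by
    have e : ∀ u : V, (∑ v : V, if u ∈ Sᶜ ∧ f u ∈ S then D u v else 0)
        = if u ∈ Sᶜ then (if f u ∈ S then T u else 0) else 0 := by
      intro u
      by_cases h1 : u ∈ Sᶜ <;> by_cases h2 : f u ∈ S <;> simp [h1, h2, hT]
    rw [Finset.sum_congr rfl fun u (_ : u ∈ Finset.univ) => e u,
      Finset.sum_ite_mem, Finset.univ_inter]
  rw [hpush, hD, hmove, ← hB, ← hC]
  calc (∑ u : V, ∑ v : V, (if f u ∈ S ∧ f v ∈ Sᶜ then D u v else 0))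
      ≤ ∑ u : V, ∑ v : V, ((if u ∈ S ∧ v ∈ Sᶜ then D u v else 0)
        + ((if v ∈ S ∧ f v ∈ Sᶜ then D u v else 0) + (if u ∈ Sᶜ ∧ f u ∈ S then D u v else 0))) :=
        Finset.sum_le_sum fun u _ => Finset.sum_le_sum fun v _ => pt u v
    _ = _ := by simp only [Finset.sum_add_distrib]


/-- **Rerouting lemma.** If the cut condition holds for `D` in `G` and
`D'_f` is routable in `γ·G`, then the cut condition holds for `D_f` in `(γ+1)·G`. -/
theorem rerouting_cut_condition
    (G : SimpleGraph V) (c : V → V → ℚ) (hc : IsPosWeight G c)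
    (D : V → V → ℚ) (hsym : ∀ u v, D u v = D v u) (hnn : ∀ u v, 0 ≤ D u v)
    (f : V → V) (γ : ℚ) (hγ : 0 < γ)
    (hcut : CutCond c D)
    (hroute : ∃ g, IsRouting G (fun u v => γ * c u v) (moveDemand D f) 1 g) :
    CutCond (fun u v => (γ + 1) * c u v) (pushDemand D f) := by
  obtain ⟨g, hg⟩ := hroute
  intro S
  have h1 := push_le D hsym hnn f S
  have h2 := routing_le_cut G (fun u v => γ * c u v) (moveDemand D f) 1 g hg S
  have h3 := hcut S
  have h4 : cutW (fun u v => (γ + 1) * c u v) S = (γ + 1) * cutW c S := by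
    simp [cutW, Finset.mul_sum]
  have h5 : cutW (fun u v => γ * c u v) S = γ * cutW c S := by
    simp [cutW, Finset.mul_sum]
  rw [h4]
  rw [h5, one_mul] at h2
  linarith


end FlowCut
end
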